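/- Let g(t) be a differentiable family of inner products on R^N and n(t) the g(t)-unit normal to a fixed hyperplane (i.e., g(t)(n, X) = 0 for all X in the hyperplane and g(t)(n, n) = 1). Then the derivative satisfies dn/dt = (1/2) ġ(n,n) n − L_ġ n, where L_ġ is the endomorphism with g(L_ġ X, Y) = ġ(X,Y). -/

import Mathlib

/-!
Differentiating the constraints `g(n, X) = 0` (`X ∈ H`) and `g(n, n) = 1` fixes the pairing
of `ṅ` with `H` and with `n`: `g(ṅ, X) = -ġ(n, X)` and `g(ṅ, n) = -½ ġ(n, n)`. Since
`g(L_ġ n, ·) = ġ(n, ·)`, the vector `½ ġ(n, n) n - L_ġ n` has the same pairings. As `n ∉ H` and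
`H` is a hyperplane, `H` and `n` span everything, so the two vectors are equal by
nondegeneracy of `g`.
-/

open Matrix

section Derivatives

variable {𝕜 ι : Type*} [NontriviallyNormedField 𝕜] {t : 𝕜}

theorem isSymm_of_hasDerivAt {M : 𝕜 → Matrix ι ι 𝕜} {M' : Matrix ι ι 𝕜}
    (hsymm : ∀ s, (M s).IsSymm) (hM : ∀ i j, HasDerivAt (fun u => M u i j) (M' i j) t) :
    M'.IsSymm := by
  ext i j
  refine (hM j i).unique ?_
  simpa only [fun u => (hsymm u).apply i j] using hM i j

variable [Fintype ι]

theorem hasDerivAt_dotProduct {a b : 𝕜 → ι → 𝕜} {a' b' : ι → 𝕜}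
    (ha : ∀ i, HasDerivAt (fun u => a u i) (a' i) t)
    (hb : ∀ i, HasDerivAt (fun u => b u i) (b' i) t) :
    HasDerivAt (fun u => a u ⬝ᵥ b u) (a' ⬝ᵥ b t + a t ⬝ᵥ b') t := by
  simpa [dotProduct, Finset.sum_add_distrib] using
    HasDerivAt.fun_sum (fun i _ => (ha i).mul (hb i))

theorem hasDerivAt_mulVec_apply {M : 𝕜 → Matrix ι ι 𝕜} {M' : Matrix ι ι 𝕜}
    {b : 𝕜 → ι → 𝕜} {b' : ι → 𝕜}
    (hM : ∀ i j, HasDerivAt (fun u => M u i j) (M' i j) t)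
    (hb : ∀ j, HasDerivAt (fun u => b u j) (b' j) t) (i : ι) :
    HasDerivAt (fun u => (M u *ᵥ b u) i) ((M' *ᵥ b t + M t *ᵥ b') i) t := by
  simpa [mulVec, dotProduct, Finset.sum_add_distrib] using
    HasDerivAt.fun_sum (fun j _ => (hM i j).mul (hb j))

theorem dotProduct_mulVec_deriv_eq_zero_of_const {a b : 𝕜 → ι → 𝕜} {a' b' : ι → 𝕜}
    {M : 𝕜 → Matrix ι ι 𝕜} {M' : Matrix ι ι 𝕜} {c : 𝕜}
    (ha : ∀ i, HasDerivAt (fun u => a u i) (a' i) t)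
    (hM : ∀ i j, HasDerivAt (fun u => M u i j) (M' i j) t)
    (hb : ∀ i, HasDerivAt (fun u => b u i) (b' i) t)
    (hconst : ∀ s, a s ⬝ᵥ M s *ᵥ b s = c) :
    a' ⬝ᵥ M t *ᵥ b t + a t ⬝ᵥ M' *ᵥ b t + a t ⬝ᵥ M t *ᵥ b' = 0 := by
  have hd := hasDerivAt_dotProduct ha (hasDerivAt_mulVec_apply hM hb)
  simp only [hconst] at hd
  rw [add_assoc, ← dotProduct_add]
  exact hd.unique (hasDerivAt_const t c)

end Derivatives

theorem Submodule.eq_top_of_lt_of_finrank_eq_sub_one {K V : Type*} [DivisionRing K]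
    [AddCommGroup V] [Module K V] [FiniteDimensional K V] {H W : Submodule K V}
    (hH : Module.finrank K H = Module.finrank K V - 1) (hlt : H < W) : W = ⊤ := by
  have hH_lt := Submodule.finrank_lt_finrank_of_lt hlt
  have hW_le := Submodule.finrank_le W
  exact Submodule.eq_top_of_finrank_eq (by omega)

namespace Matrix

variable {R ι : Type*} [CommRing R] [Fintype ι]

theorem IsSymm.dotProduct_mulVec_comm {A : Matrix ι ι R} (hA : A.IsSymm) (x y : ι → R) :
    x ⬝ᵥ A *ᵥ y = y ⬝ᵥ A *ᵥ x := by
  rw [← dotProduct_transpose_mulVec, hA.eq]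

theorem IsSymm.nonsing_inv_mulVec_dotProduct_mulVec [DecidableEq ι] {G G' : Matrix ι ι R}
    (hG : G.IsSymm) (hG' : G'.IsSymm) (hdet : IsUnit G.det) (x y : ι → R) :
    G⁻¹ *ᵥ (G' *ᵥ x) ⬝ᵥ G *ᵥ y = x ⬝ᵥ G' *ᵥ y := by
  rw [hG.dotProduct_mulVec_comm, mulVec_mulVec, mul_nonsing_inv _ hdet, one_mulVec,
    hG'.dotProduct_mulVec_comm]

theorem PosDef.eq_of_dotProduct_mulVec_eq_of_hyperplane {K : Type*} [Field K]
    [PartialOrder K] [StarRing K] [TrivialStar K]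
    {G : Matrix ι ι K} (hG : G.PosDef) {H : Submodule K (ι → K)}
    (hH : Module.finrank K H = Fintype.card ι - 1) {n u v : ι → K} (hn : n ∉ H)
    (hHuv : ∀ x ∈ H, u ⬝ᵥ G *ᵥ x = v ⬝ᵥ G *ᵥ x) (hnuv : u ⬝ᵥ G *ᵥ n = v ⬝ᵥ G *ᵥ n) :
    u = v := by
  classical
  set f : (ι → K) →ₗ[K] K := toLinearMap₂' K G (u - v)
  have hf : ∀ x, f x = u ⬝ᵥ G *ᵥ x - v ⬝ᵥ G *ᵥ x := fun x => by
    rw [toLinearMap₂'_apply', sub_dotProduct]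
  have hker : LinearMap.ker f = ⊤ := by
    refine Submodule.eq_top_of_lt_of_finrank_eq_sub_one
      (by rwa [Module.finrank_fintype_fun_eq_card]) (lt_of_le_of_ne (fun x hx => ?_) ?_)
    · simp [hf, hHuv x hx]
    · rintro rfl
      exact hn (by simp [hf, hnuv])
  have hself : star (u - v) ⬝ᵥ G *ᵥ (u - v) = 0 := by
    rw [star_trivial, ← toLinearMap₂'_apply']
    exact LinearMap.congr_fun (LinearMap.ker_eq_top.1 hker) (u - v)
  by_contra huv
  exact (hG.dotProduct_mulVec_pos (sub_ne_zero.2 huv)).ne' hself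

end Matrix

theorem deriv_unit_normal_of_evolving_metric_general
    {N : ℕ} (g g' : ℝ → Matrix (Fin N) (Fin N) ℝ)
    (H : Submodule ℝ (Fin N → ℝ)) (hH : Module.finrank ℝ H = N - 1)
    (n n' : ℝ → (Fin N → ℝ)) (t : ℝ)
    (hgp : ∀ s, (g s).PosDef)
    (hgd : ∀ i j s, HasDerivAt (fun u => g u i j) (g' s i j) s)
    (hnd : ∀ i s, HasDerivAt (fun u => n u i) (n' s i) s)
    (hperp : ∀ s, ∀ x ∈ H, n s ⬝ᵥ (g s).mulVec x = 0)
    (hunit : ∀ s, n s ⬝ᵥ (g s).mulVec (n s) = 1) :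
    n' t = ((1 / 2) * (n t ⬝ᵥ (g' t).mulVec (n t))) • n t
      - (g t)⁻¹.mulVec ((g' t).mulVec (n t)) := by
  have hgs : ∀ s, (g s).IsSymm := fun s => isHermitian_iff_isSymm.1 (hgp s).isHermitian
  have hg's : (g' t).IsSymm := isSymm_of_hasDerivAt hgs (hgd · · t)
  have hL := (hgs t).nonsing_inv_mulVec_dotProduct_mulVec hg's (hgp t).det_pos.ne'.isUnit (n t)
  have hnH : n t ∉ H := fun h => by simpa [hunit t] using hperp t _ h
  refine (hgp t).eq_of_dotProduct_mulVec_eq_of_hyperplane (by simpa using hH) hnH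
    (fun x hx => ?_) ?_
  · have hperp_deriv := dotProduct_mulVec_deriv_eq_zero_of_const (hnd · t) (hgd · · t)
      (b' := 0) (fun i => hasDerivAt_const t (x i)) (hperp · x hx)
    simp only [mulVec_zero, dotProduct_zero, add_zero] at hperp_deriv
    rw [sub_dotProduct, smul_dotProduct, hperp t x hx, hL, smul_zero, zero_sub]
    linarith
  · have hunit_deriv :=
      dotProduct_mulVec_deriv_eq_zero_of_const (hnd · t) (hgd · · t) (hnd · t) hunit
    rw [(hgs t).dotProduct_mulVec_comm (n t) (n' t)] at hunit_deriv
    rw [sub_dotProduct, smul_dotProduct, hunit t, hL, smul_eq_mul]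
    linarith

/-- Let `g t` be a differentiable family of inner products on `ℝ^N` (symmetric positive
definite matrices, with entrywise derivative `g' t`) and `n t` the `g t`-unit normal to
a fixed hyperplane `H` (i.e. `g t (n t, x) = 0` for all `x ∈ H` and `g t (n t, n t) = 1`),
differentiable with derivative `n' t`.  Then
`dn/dt = (1/2) ġ(n, n) n − L_ġ n`, where `L_ġ = g⁻¹ ġ` is the endomorphism with
`g(L_ġ X, Y) = ġ(X, Y)`. -/
theorem deriv_unit_normal_of_evolving_metric
    {N : ℕ} (g g' : ℝ → Matrix (Fin N) (Fin N) ℝ)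
    (H : Submodule ℝ (Fin N → ℝ)) (hH : Module.finrank ℝ H = N - 1)
    (n n' : ℝ → (Fin N → ℝ)) (t : ℝ)
    (hgs : ∀ s, (g s).IsSymm) (hgp : ∀ s, (g s).PosDef)
    (hgd : ∀ i j s, HasDerivAt (fun u => g u i j) (g' s i j) s)
    (hnd : ∀ i s, HasDerivAt (fun u => n u i) (n' s i) s)
    (hperp : ∀ s, ∀ x ∈ H, n s ⬝ᵥ (g s).mulVec x = 0)
    (hunit : ∀ s, n s ⬝ᵥ (g s).mulVec (n s) = 1) :
    n' t = ((1 / 2) * (n t ⬝ᵥ (g' t).mulVec (n t))) • n t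
      - (g t)⁻¹.mulVec ((g' t).mulVec (n t)) :=
  deriv_unit_normal_of_evolving_metric_general g g' H hH n n' t hgp hgd hnd hperp hunit
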